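/- arXiv:2107.09813 — 2 statements merged into one kernel-verified Lean document; each statement's English description precedes it below -/
import Mathlib

section
/- Let μ ∈ T and let g ∈ K[x]∖K. Then g is μ-minimal if and only if for every nonzero f ∈ K[x], writing the g-expansion f = Σ_s a_s g^s with deg(a_s) < deg(g), one has μ(f) = min_s μ(a_s g^s). -/
open Polynomial

namespace MLV

variable {K : Type*} [Field K] {Λ : Type*} [AddCommGroup Λ] [LinearOrder Λ] [IsOrderedAddMonoid Λ]

/-- A valuation on the field `K` with values in `Λ∞ = WithTop Λ`. -/
structure FieldVal (K : Type*) (Λ : Type*) [Field K] [AddCommGroup Λ] [LinearOrder Λ] [IsOrderedAddMonoid Λ] where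
  v : K → WithTop Λ
  map_one' : v 1 = 0
  map_zero' : v 0 = ⊤
  ne_top' : ∀ a : K, a ≠ 0 → v a ≠ ⊤
  map_mul' : ∀ a b : K, v (a * b) = v a + v b
  map_add' : ∀ a b : K, min (v a) (v b) ≤ v (a + b)

/-- `μ` is a node of the tree `T = T(Λ)`: a valuation on `K[x]` with values in `Λ∞`
whose restriction to `K` is `v`. -/
def IsValT (v : FieldVal K Λ) (μ : Polynomial K → WithTop Λ) : Prop :=
  μ 1 = 0 ∧ μ 0 = ⊤ ∧ (∀ f g : Polynomial K, μ (f * g) = μ f + μ g) ∧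
    (∀ f g : Polynomial K, min (μ f) (μ g) ≤ μ (f + g)) ∧
    ∀ a : K, μ (C a) = v.v a

/-- `g ∼_μ h` : `μ(g - h) > μ(g)`. -/
def MuEquiv (μ : Polynomial K → WithTop Λ) (g h : Polynomial K) : Prop :=
  μ g < μ (g - h)

/-- `h ∣_μ g` : `g ∼_μ f * h` for some `f`. -/
def MuDvd (μ : Polynomial K → WithTop Λ) (h g : Polynomial K) : Prop :=
  ∃ f : Polynomial K, MuEquiv μ g (f * h)

/-- `g ∈ K[x] \ K` is `μ`-minimal if it `μ`-divides no nonzero polynomial of smaller degree. -/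
def IsMuMinimal (μ : Polynomial K → WithTop Λ) (g : Polynomial K) : Prop :=
  0 < g.natDegree ∧
    ∀ f : Polynomial K, f ≠ 0 → f.degree < g.degree → ¬ MuDvd μ g f

/-- `g` is `μ`-irreducible. -/
def IsMuIrreducible (μ : Polynomial K → WithTop Λ) (g : Polynomial K) : Prop :=
  μ g ≠ ⊤ ∧ (¬ ∃ f : Polynomial K, MuEquiv μ (f * g) 1) ∧
    ∀ f h : Polynomial K, MuDvd μ g (f * h) → MuDvd μ g f ∨ MuDvd μ g h

/-- A (Maclane-Vaquié) key polynomial for `μ`. -/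
def IsKeyPol (μ : Polynomial K → WithTop Λ) (φ : Polynomial K) : Prop :=
  φ.Monic ∧ IsMuMinimal μ φ ∧ IsMuIrreducible μ φ

/-- An inner node: a valuation admitting key polynomials. -/
def IsInnerNode (μ : Polynomial K → WithTop Λ) : Prop :=
  ∃ φ : Polynomial K, IsKeyPol μ φ

/-- `deg(μ)`: the minimal degree of a key polynomial for `μ`. -/
noncomputable def degOf (μ : Polynomial K → WithTop Λ) : ℕ :=
  sInf {n : ℕ | ∃ φ : Polynomial K, IsKeyPol μ φ ∧ φ.natDegree = n}

/-- A key polynomial of minimal degree. -/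
def IsMinKeyPol (μ : Polynomial K → WithTop Λ) (φ : Polynomial K) : Prop :=
  IsKeyPol μ φ ∧ ∀ ψ : Polynomial K, IsKeyPol μ ψ → φ.natDegree ≤ ψ.natDegree

/-- the class `[φ]_μ` of key polynomials `μ`-equivalent to `φ`. -/
def KeyPolClass (μ : Polynomial K → WithTop Λ) (φ : Polynomial K) : Set (Polynomial K) :=
  {ψ : Polynomial K | IsKeyPol μ ψ ∧ MuEquiv μ ψ φ}

/-- The coefficient `a_s` of the `φ`-expansion `f = Σ_s a_s φ^s` (for `φ` monic nonconstant). -/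
noncomputable def expCoeff (φ f : Polynomial K) (s : ℕ) : Polynomial K :=
  (f /ₘ φ ^ s) %ₘ φ

/-- The augmented valuation `[μ; φ, γ]`, acting on `φ`-expansions by
`ν(Σ_s a_s φ^s) = min_s (μ(a_s) + s γ)`. -/
noncomputable def augVal (μ : Polynomial K → WithTop Λ) (φ : Polynomial K)
    (γ : WithTop Λ) (f : Polynomial K) : WithTop Λ :=
  (Finset.range (f.natDegree + 1)).inf'
    (Finset.nonempty_range_iff.mpr (Nat.succ_ne_zero _))
    fun s => μ (expCoeff φ f s) + s • γ

/-- The depth-zero valuation `ω_{a,δ}`, acting on `(x-a)`-expansions by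
`ω(Σ_s a_s (x-a)^s) = min_s (v(a_s) + s δ)`. -/
noncomputable def omegaVal (v : FieldVal K Λ) (a : K) (δ : WithTop Λ)
    (f : Polynomial K) : WithTop Λ :=
  (Finset.range (f.natDegree + 1)).inf'
    (Finset.nonempty_range_iff.mpr (Nat.succ_ne_zero _))
    fun s => v.v ((taylor a f).coeff s) + s • δ

/-- The tangent direction `t(μ,ν)`: monic polynomials of minimal degree with `μ(φ) < ν(φ)`. -/
def TangentDir (μ ν : Polynomial K → WithTop Λ) : Set (Polynomial K) :=
  {φ : Polynomial K | φ.Monic ∧ μ φ < ν φ ∧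
    ∀ ψ : Polynomial K, ψ.Monic → μ ψ < ν ψ → φ.natDegree ≤ ψ.natDegree}

/-- The set of finite values of `μ`. -/
def valSet (μ : Polynomial K → WithTop Λ) : Set Λ :=
  {γ : Λ | ∃ f : Polynomial K, μ f = (γ : WithTop Λ)}

/-- The value group `Γ_μ`. -/
def valGroup (μ : Polynomial K → WithTop Λ) : AddSubgroup Λ :=
  AddSubgroup.closure (valSet μ)

/-- `Γ = v(K^*)` as a subset of `Λ`. -/
def gammaSet (v : FieldVal K Λ) : Set Λ :=
  {γ : Λ | ∃ a : K, v.v a = (γ : WithTop Λ)}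

/-- The value group `Γ` of the base field valuation. -/
def baseGroup (v : FieldVal K Λ) : AddSubgroup Λ :=
  AddSubgroup.closure (gammaSet v)

/-- `μ` is commensurable over `v` : `Γ_μ/Γ` is torsion. -/
def IsCommensurable (v : FieldVal K Λ) (μ : Polynomial K → WithTop Λ) : Prop :=
  ∀ γ : Λ, γ ∈ valGroup μ → ∃ n : ℕ, 0 < n ∧ n • γ ∈ baseGroup v

/-- `Γ_μ^0 = {μ(a) : a ∈ K[x], 0 ≤ deg(a) < deg(μ)}`. -/
noncomputable def degZeroSet (μ : Polynomial K → WithTop Λ) : Set Λ :=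
  {δ : Λ | ∃ a : Polynomial K, a ≠ 0 ∧ a.natDegree < degOf μ ∧ μ a = (δ : WithTop Λ)}

/-- Equivalence of valuations: an order-preserving isomorphism `ι : Γ_μ → Γ_ν`
with `ν = ι ∘ μ`. -/
def ValEquiv (μ ν : Polynomial K → WithTop Λ) : Prop :=
  ∃ ι : valGroup μ ≃+ valGroup ν,
    Monotone ι ∧ (∀ f : Polynomial K, μ f = ⊤ ↔ ν f = ⊤) ∧
    ∀ (f : Polynomial K) (γ : Λ) (h : μ f = (γ : WithTop Λ)),
      ν f = ((ι ⟨γ, AddSubgroup.subset_closure ⟨f, h⟩⟩ : Λ) : WithTop Λ)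

/-- `β ∼_sme γ` : an order-preserving isomorphism `⟨Γ,β⟩ → ⟨Γ,γ⟩` fixing `Γ`
and mapping `β` to `γ`. -/
def SmeEquiv (v : FieldVal K Λ) (β γ : Λ) : Prop :=
  ∃ ι : (AddSubgroup.closure (gammaSet v ∪ {β}) : AddSubgroup Λ) ≃+
      (AddSubgroup.closure (gammaSet v ∪ {γ}) : AddSubgroup Λ),
    Monotone ι ∧
    (∀ (a : Λ) (ha : a ∈ gammaSet v),
      ((ι ⟨a, AddSubgroup.subset_closure (Set.mem_union_left _ ha)⟩ : Λ) = a)) ∧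
    ((ι ⟨β, AddSubgroup.subset_closure (Set.mem_union_right _ rfl)⟩ : Λ) = γ)

section Families

variable {ι : Type*} [LinearOrder ι]

/-- A totally ordered family of inner nodes of `T`, indexed order-isomorphically by a
totally ordered set, containing no maximal element. -/
def IsTOFamily (v : FieldVal K Λ) (ρ : ι → Polynomial K → WithTop Λ) : Prop :=
  (∀ i, IsValT v (ρ i)) ∧ (∀ i, IsInnerNode (ρ i)) ∧ StrictMono ρ ∧
    ∀ i : ι, ∃ j : ι, i < j

/-- `f` is `A`-stable: the values `ρ_i(f)` are eventually constant. -/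
def IsStablePoly (ρ : ι → Polynomial K → WithTop Λ) (f : Polynomial K) : Prop :=
  ∃ i : ι, ∀ j : ι, i ≤ j → ρ j f = ρ i f

/-- `β` is the stable value `ρ_A(f)`. -/
def IsStableVal (ρ : ι → Polynomial K → WithTop Λ) (f : Polynomial K)
    (β : WithTop Λ) : Prop :=
  ∃ i : ι, ∀ j : ι, i ≤ j → ρ j f = β

open Classical in
/-- The stability function `ρ_A` (junk value `⊤` on unstable polynomials). -/
noncomputable def stableVal (ρ : ι → Polynomial K → WithTop Λ) (f : Polynomial K) :
    WithTop Λ :=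
  if h : ∃ β : WithTop Λ, IsStableVal ρ f β then h.choose else ⊤

/-- The family has stable degree `m`. -/
def HasStableDeg (ρ : ι → Polynomial K → WithTop Λ) (m : ℕ) : Prop :=
  ∃ i : ι, ∀ j : ι, i ≤ j → degOf (ρ j) = m

/-- A continuous family: a totally ordered family of eventually constant degree. -/
def IsContFamily (v : FieldVal K Λ) (ρ : ι → Polynomial K → WithTop Λ) : Prop :=
  IsTOFamily v ρ ∧ ∃ m : ℕ, HasStableDeg ρ m

/-- The stable group `Γ_C`: stable values of nonzero stable polynomials. -/
def stableSet (ρ : ι → Polynomial K → WithTop Λ) : Set Λ :=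
  {δ : Λ | ∃ f : Polynomial K, f ≠ 0 ∧ IsStableVal ρ f (δ : WithTop Λ)}

/-- A limit key polynomial: monic, unstable, of minimal degree among unstable polynomials. -/
def IsLimKeyPol (ρ : ι → Polynomial K → WithTop Λ) (φ : Polynomial K) : Prop :=
  φ.Monic ∧ ¬ IsStablePoly ρ φ ∧
    ∀ f : Polynomial K, ¬ IsStablePoly ρ f → φ.natDegree ≤ f.natDegree

/-- An essential continuous family: `m(C) < m_∞(C) < ∞`. -/
def IsEssential (v : FieldVal K Λ) (ρ : ι → Polynomial K → WithTop Λ) : Prop :=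
  IsTOFamily v ρ ∧
    ∃ m : ℕ, HasStableDeg ρ m ∧
      ∃ φ : Polynomial K, IsLimKeyPol ρ φ ∧ m < φ.natDegree

/-- The limit augmentation `[C; φ, γ]`, acting on `φ`-expansions by
`ν(Σ_s a_s φ^s) = min_s (ρ_C(a_s) + s γ)`. -/
noncomputable def limAugVal (ρ : ι → Polynomial K → WithTop Λ) (φ : Polynomial K)
    (γ : WithTop Λ) (f : Polynomial K) : WithTop Λ :=
  (Finset.range (f.natDegree + 1)).inf'
    (Finset.nonempty_range_iff.mpr (Nat.succ_ne_zero _))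
    fun s => stableVal ρ (expCoeff φ f s) + s • γ

/-- Equivalence of totally ordered families: mutual cofinality. -/
def FamEquiv {κ : Type*} [LinearOrder κ] (ρ : ι → Polynomial K → WithTop Λ)
    (σ : κ → Polynomial K → WithTop Λ) : Prop :=
  (∀ i : ι, ∃ j : κ, ρ i ≤ σ j) ∧ ∀ j : κ, ∃ i : ι, σ j ≤ ρ i

end Families

end MLV

open MLV

/-!
Everything reduces to the case of expansions of length two: if `g` is `μ`-minimal and
`deg a < deg g`, then `μ(a + g h) = min (μ a) (μ (g h))`, because `μ(a + g h) > μ a` would say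
exactly that `g` `μ`-divides `a`. Peeling off the constant coefficient,
`Σ a_s g^s = a_0 + g · Σ a_{s+1} g^s`, induction on the length shows that `μ` of an expansion
is at most each of its terms, and the ultrametric inequality gives the other bound.

Conversely, if `μ(f - q g) > μ f` with `f ≠ 0` and `deg f < deg g`, expand `q = Σ b_s g^s`:
then `f - q g = f - Σ b_s g^(s+1)` is a nonzero `g`-expansion with constant coefficient `f`,
so its value is at most `μ f`.
-/

namespace Polynomial

lemma sum_range_succ_mul_pow {R : Type*} [CommSemiring R] (c : ℕ → R) (g : R) (n : ℕ) :
    ∑ s ∈ Finset.range (n + 1), c s * g ^ s =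
      c 0 + g * ∑ s ∈ Finset.range n, c (s + 1) * g ^ s := by
  rw [Finset.sum_range_succ', Finset.mul_sum, add_comm]
  simp only [pow_zero, mul_one, pow_succ]
  congr 1
  exact Finset.sum_congr rfl fun _ _ => by ring

lemma exists_expansion {K : Type*} [Field K] {g : K[X]} (hg : 0 < g.degree) (q : K[X]) :
    ∃ (n : ℕ) (b : ℕ → K[X]), (∀ s, (b s).degree < g.degree) ∧
      q = ∑ s ∈ Finset.range n, b s * g ^ s := by
  by_cases hq : q = 0
  · exact ⟨0, 0, fun _ => bot_le.trans_lt hg, by simp [hq]⟩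
  obtain ⟨n, b, hb, hqb⟩ := exists_expansion hg (q / g)
  refine ⟨n + 1, fun | 0 => q % g | s + 1 => b s,
    fun | 0 => degree_mod_lt q (ne_zero_of_degree_gt hg) | s + 1 => hb s, ?_⟩
  rw [sum_range_succ_mul_pow, ← hqb]
  exact (EuclideanDomain.mod_add_div q g).symm
termination_by q.degree
decreasing_by exact degree_div_lt hq hg

end Polynomial

namespace MLV

variable {K : Type*} [Field K] {Λ : Type*} [LinearOrder Λ] {μ : K[X] → WithTop Λ} {g : K[X]}

lemma isMuMinimal_of_mu_le_expansion (hg : 0 < g.natDegree)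
    (H : ∀ f : K[X], f ≠ 0 → ∀ (n : ℕ) (a : ℕ → K[X]),
      (∀ s, (a s).degree < g.degree) → f = ∑ s ∈ Finset.range n, a s * g ^ s →
        ∀ s < n, μ f ≤ μ (a s * g ^ s)) :
    IsMuMinimal μ g := by
  refine ⟨hg, fun f hf hfg ⟨q, hq⟩ => ?_⟩
  obtain ⟨n, b, hb, rfl⟩ := exists_expansion (natDegree_pos_iff_degree_pos.mp hg) q
  set q := ∑ s ∈ Finset.range n, b s * g ^ s
  have hF : f - q * g ≠ 0 := fun h =>
    hfg.not_ge (degree_le_of_dvd (Dvd.intro_left q (sub_eq_zero.mp h).symm) hf)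
  have hexp : f - q * g = ∑ s ∈ Finset.range (n + 1),
      (fun | 0 => f | s + 1 => -b s : ℕ → K[X]) s * g ^ s := by
    rw [sum_range_succ_mul_pow, Finset.sum_mul, Finset.mul_sum, sub_eq_add_neg,
      ← Finset.sum_neg_distrib]
    exact congrArg (f + ·) (Finset.sum_congr rfl fun s _ => by ring)
  have h_le := H _ hF (n + 1) _ (fun | 0 => hfg | s + 1 => by rw [degree_neg]; exact hb s)
    hexp 0 n.succ_pos
  rw [pow_zero, mul_one] at h_le
  exact hq.not_ge h_le

variable [AddCommGroup Λ] [IsOrderedAddMonoid Λ] {v : FieldVal K Λ}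

noncomputable def IsValT.toAddValuation (hμ : IsValT v μ) : AddValuation K[X] (WithTop Λ) :=
  AddValuation.of μ hμ.2.1 hμ.1 hμ.2.2.2.1 hμ.2.2.1

lemma IsMuMinimal.mu_add_mul (hμ : IsValT v μ) (hmin : IsMuMinimal μ g) {a : K[X]}
    (ha : a.degree < g.degree) (h : K[X]) : μ (a + g * h) = min (μ a) (μ (g * h)) := by
  rcases lt_or_ge (μ (g * h)) (μ a) with hlt | hle
  · rw [min_eq_right hlt.le]
    exact hμ.toAddValuation.map_add_eq_of_lt_right hlt
  · rw [min_eq_left hle]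
    refine le_antisymm ?_ (min_eq_left hle ▸ hμ.toAddValuation.map_add a (g * h))
    by_cases ha0 : a = 0
    · simp [ha0, hμ.2.1]
    refine not_lt.mp fun hlt => hmin.2 a ha0 ha ⟨-h, ?_⟩
    rwa [MuEquiv, sub_eq_add_neg, neg_mul, neg_neg, mul_comm]

lemma IsMuMinimal.mu_sum_le (hμ : IsValT v μ) (hmin : IsMuMinimal μ g)
    {a : ℕ → K[X]} (ha : ∀ s, (a s).degree < g.degree) (n : ℕ) :
    ∀ s < n, μ (∑ t ∈ Finset.range n, a t * g ^ t) ≤ μ (a s * g ^ s) := by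
  induction n generalizing a with
  | zero => simp
  | succ n ih =>
    rw [sum_range_succ_mul_pow, hmin.mu_add_mul hμ (ha 0)]
    rintro (_ | s) hs
    · simp
    · refine min_le_of_right_le ?_
      rw [hμ.2.2.1, pow_succ', mul_left_comm, hμ.2.2.1 g]
      gcongr
      exact ih (fun s => ha (s + 1)) s (by omega)

lemma IsMuMinimal.mu_sum_eq (hμ : IsValT v μ) (hmin : IsMuMinimal μ g)
    {a : ℕ → K[X]} (ha : ∀ s, (a s).degree < g.degree) {n : ℕ} (hn : n ≠ 0) :
    (∀ s < n, μ (∑ t ∈ Finset.range n, a t * g ^ t) ≤ μ (a s * g ^ s)) ∧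
      ∃ s < n, μ (∑ t ∈ Finset.range n, a t * g ^ t) = μ (a s * g ^ s) := by
  have hle := hmin.mu_sum_le hμ ha n
  obtain ⟨s, hs, hs_min⟩ := (Finset.range n).exists_min_image (fun s => μ (a s * g ^ s))
    (Finset.nonempty_range_iff.mpr hn)
  rw [Finset.mem_range] at hs
  exact ⟨hle, s, hs, (hle s hs).antisymm (hμ.toAddValuation.map_le_sum hs_min)⟩

end MLV

/-- A polynomial `g ∈ K[x] \ K` is `μ`-minimal if and only if `μ` acts as the minimum on
`g`-expansions: for every nonzero `f = Σ_s a_s g^s` with `deg a_s < deg g`,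
`μ(f) = min_s μ(a_s g^s)`. -/
theorem statement_0 {K : Type*} [Field K] {Λ : Type*} [AddCommGroup Λ] [LinearOrder Λ] [IsOrderedAddMonoid Λ]
    (v : FieldVal K Λ) (μ : Polynomial K → WithTop Λ) (hμ : IsValT v μ)
    (g : Polynomial K) (hg : 0 < g.natDegree) :
    IsMuMinimal μ g ↔
      ∀ f : Polynomial K, f ≠ 0 →
        ∀ (n : ℕ) (a : ℕ → Polynomial K),
          (∀ s : ℕ, (a s).degree < g.degree) →
          f = ∑ s ∈ Finset.range n, a s * g ^ s →
          (∀ s < n, μ f ≤ μ (a s * g ^ s)) ∧ ∃ s < n, μ f = μ (a s * g ^ s) := by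
  refine ⟨fun hmin f hf n a ha hfa => ?_, fun H =>
    isMuMinimal_of_mu_le_expansion hg fun f hf n a ha hfa => (H f hf n a ha hfa).1⟩
  subst hfa
  exact hmin.mu_sum_eq hμ ha (by rintro rfl; exact hf (Finset.sum_range_zero _))
end

section
/- A valuation μ ∈ T is a maximal element of the poset T if and only if KP(μ) = ∅, i.e. μ admits no key polynomial. -/
open Polynomial

/-!
A key polynomial `φ` for `μ` gives the strictly larger valuation `f ↦ μ(f mod φ)`:
`μ`-minimality of `φ` gives `μ ≤ μ(· mod φ)`, `μ`-irreducibility makes it multiplicative, and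
it sends `φ` to `∞`. Conversely, if `μ < ν`, a monic `φ` of minimal degree with `μ(φ) < ν(φ)`
satisfies `φ ∣_μ g ↔ μ(g) < ν(g)`, and `μ`-minimality and `μ`-irreducibility of `φ` follow.
-/

namespace MLV

variable {K : Type*} [Field K] {Λ : Type*} [LinearOrder Λ] {μ ν : K[X] → WithTop Λ}
  {φ f g a b : K[X]}

lemma muDvd_of_val_lt_val_modByMonic (h : μ g < μ (g %ₘ φ)) : MuDvd μ φ g :=
  ⟨g /ₘ φ, by
    rwa [MuEquiv, show g - g /ₘ φ * φ = g %ₘ φ by linear_combination -modByMonic_add_div g φ]⟩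

variable [AddCommGroup Λ] [IsOrderedAddMonoid Λ] {v : FieldVal K Λ}

namespace IsValT

noncomputable def toAddValuation_s1 (hμ : IsValT v μ) : AddValuation K[X] (WithTop Λ) :=
  AddValuation.of μ hμ.2.1 hμ.1 hμ.2.2.2.1 hμ.2.2.1

lemma map_one (hμ : IsValT v μ) : μ 1 = 0 := hμ.1

lemma map_zero (hμ : IsValT v μ) : μ 0 = ⊤ := hμ.2.1

lemma map_mul (hμ : IsValT v μ) (f g : K[X]) : μ (f * g) = μ f + μ g := hμ.2.2.1 f g

lemma map_add (hμ : IsValT v μ) (f g : K[X]) : min (μ f) (μ g) ≤ μ (f + g) := hμ.2.2.2.1 f g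

lemma map_C (hμ : IsValT v μ) (c : K) : μ (C c) = v.v c := hμ.2.2.2.2 c

lemma map_sub (hμ : IsValT v μ) (f g : K[X]) : min (μ f) (μ g) ≤ μ (f - g) :=
  hμ.toAddValuation_s1.map_sub f g

lemma map_sub_swap (hμ : IsValT v μ) (f g : K[X]) : μ (f - g) = μ (g - f) :=
  hμ.toAddValuation_s1.map_sub_swap f g

lemma map_sub_eq_of_lt_right (hμ : IsValT v μ) (h : μ g < μ f) : μ (f - g) = μ g :=
  hμ.toAddValuation_s1.map_sub_eq_of_lt_right h

lemma ne_zero_of_ne_top (hμ : IsValT v μ) (h : μ f ≠ ⊤) : f ≠ 0 := by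
  rintro rfl
  exact h hμ.map_zero

end IsValT

namespace MuEquiv

lemma val_eq (hμ : IsValT v μ) (h : MuEquiv μ f g) : μ g = μ f := by
  rw [MuEquiv, hμ.map_sub_swap] at h
  exact hμ.toAddValuation_s1.map_eq_of_lt_sub h

lemma symm (hμ : IsValT v μ) (h : MuEquiv μ f g) : MuEquiv μ g f := by
  rw [MuEquiv, h.val_eq hμ, hμ.map_sub_swap]
  exact h

end MuEquiv

lemma IsMuMinimal.val_le_val_modByMonic (hμ : IsValT v μ) (hφm : φ.Monic)
    (hφ : IsMuMinimal μ φ) (f : K[X]) : μ f ≤ μ (f %ₘ φ) := by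
  by_contra! h
  refine hφ.2 _ (hμ.ne_zero_of_ne_top h.ne_top) (degree_modByMonic_lt f hφm) ⟨-(f /ₘ φ), ?_⟩
  rwa [MuEquiv, show f %ₘ φ - -(f /ₘ φ) * φ = f by linear_combination modByMonic_add_div f φ]

lemma IsKeyPol.val_modByMonic_mul (hμ : IsValT v μ) (hφ : IsKeyPol μ φ)
    (ha : a.degree < φ.degree) (hb : b.degree < φ.degree) :
    μ (a * b %ₘ φ) = μ a + μ b := by
  obtain ⟨hφm, hφmin, -, -, hφirr⟩ := hφ
  rw [← hμ.map_mul]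
  refine (le_antisymm (hφmin.val_le_val_modByMonic hμ hφm _) (not_lt.1 fun h => ?_)).symm
  have hab : a * b ≠ 0 := hμ.ne_zero_of_ne_top h.ne_top
  rcases hφirr a b (muDvd_of_val_lt_val_modByMonic h) with ha' | hb'
  exacts [hφmin.2 a (left_ne_zero_of_mul hab) ha ha',
    hφmin.2 b (right_ne_zero_of_mul hab) hb hb']

lemma IsKeyPol.isValT_val_modByMonic (hμ : IsValT v μ) (hφ : IsKeyPol μ φ) :
    IsValT v (fun f => μ (f %ₘ φ)) := by
  have hC (c : K) : C c %ₘ φ = C c :=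
    (modByMonic_eq_self_iff hφ.1).2 <|
      degree_C_le.trans_lt (natDegree_pos_iff_degree_pos.1 hφ.2.1.1)
  refine ⟨?_, ?_, fun f g => ?_, fun f g => ?_, fun c => ?_⟩
  · simpa only [map_one] using (hC 1).symm ▸ hμ.map_one
  · simpa only [zero_modByMonic] using hμ.map_zero
  · simpa only [mul_modByMonic f g φ] using hφ.val_modByMonic_mul hμ
      (degree_modByMonic_lt f hφ.1) (degree_modByMonic_lt g hφ.1)
  · simpa only [add_modByMonic] using hμ.map_add _ _
  · simpa only [hC] using hμ.map_C c

lemma IsKeyPol.exists_isValT_lt (hμ : IsValT v μ) (hφ : IsKeyPol μ φ) :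
    ∃ ν, IsValT v ν ∧ μ < ν := by
  refine ⟨_, hφ.isValT_val_modByMonic hμ,
    Pi.lt_def.2 ⟨hφ.2.1.val_le_val_modByMonic hμ hφ.1, φ, ?_⟩⟩
  simpa only [modByMonic_self hφ.1, hμ.map_zero] using lt_top_iff_ne_top.2 hφ.2.2.1

lemma val_mul_lt_val_mul (hμ : IsValT v μ) (hν : IsValT v ν) (hle : μ ≤ ν) (ha : μ a ≠ ⊤)
    (hb : μ b < ν b) : μ (a * b) < ν (a * b) := by
  rw [hμ.map_mul, hν.map_mul]
  exact WithTop.add_lt_add_of_le_of_lt ha (hle a) hb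

lemma val_lt_or_val_lt_of_val_mul_lt (hμ : IsValT v μ) (hν : IsValT v ν) (hle : μ ≤ ν)
    (h : μ (a * b) < ν (a * b)) : μ a < ν a ∨ μ b < ν b := by
  by_contra! h'
  rw [hμ.map_mul, hν.map_mul, le_antisymm (hle a) h'.1, le_antisymm (hle b) h'.2] at h
  exact h.false

lemma MuEquiv.val_lt_val (hμ : IsValT v μ) (hν : IsValT v ν) (hle : μ ≤ ν)
    (hgf : MuEquiv μ g f) (hf : μ f < ν f) : μ g < ν g :=
  calc μ g < min (ν (g - f)) (ν f) := lt_min (hgf.trans_le (hle _)) (hgf.val_eq hμ ▸ hf)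
    _ ≤ ν (g - f + f) := hν.map_add _ _
    _ = ν g := by rw [sub_add_cancel]

lemma exists_monic_val_lt (hμ : IsValT v μ) (hν : IsValT v ν) (h : μ g < ν g) :
    ∃ ψ : K[X], ψ.Monic ∧ ψ.natDegree = g.natDegree ∧ μ ψ < ν ψ := by
  have hg : g ≠ 0 := hμ.ne_zero_of_ne_top h.ne_top
  have hc : g.leadingCoeff⁻¹ ≠ 0 := inv_ne_zero (leadingCoeff_ne_zero.2 hg)
  refine ⟨g * C g.leadingCoeff⁻¹, monic_mul_leadingCoeff_inv hg, natDegree_mul_C hc, ?_⟩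
  rw [hμ.map_mul, hν.map_mul, hμ.map_C, hν.map_C]
  exact WithTop.add_lt_add_right (v.ne_top' _ hc) h

lemma tangentDir_nonempty (hμ : IsValT v μ) (hν : IsValT v ν) (hle : μ ≤ ν) (hne : μ ≠ ν) :
    (TangentDir μ ν).Nonempty := by
  classical
  obtain ⟨f, hf⟩ := Function.ne_iff.1 hne
  have hex : ∃ n, ∃ ψ : K[X], ψ.Monic ∧ ψ.natDegree = n ∧ μ ψ < ν ψ :=
    ⟨_, exists_monic_val_lt hμ hν ((hle f).lt_of_ne hf)⟩
  obtain ⟨φ, hφm, hφdeg, hφlt⟩ := Nat.find_spec hex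
  exact ⟨φ, hφm, hφlt, fun ψ hψm hψlt => hφdeg ▸ Nat.find_min' hex ⟨ψ, hψm, rfl, hψlt⟩⟩

lemma natDegree_pos_of_mem_tangentDir (hμ : IsValT v μ) (hν : IsValT v ν)
    (hφ : φ ∈ TangentDir μ ν) : 0 < φ.natDegree := by
  refine hφ.1.natDegree_pos.2 ?_
  rintro rfl
  have h := hφ.2.1
  rw [hμ.map_one, hν.map_one] at h
  exact h.false

lemma val_eq_of_mem_tangentDir_of_natDegree_lt (hμ : IsValT v μ) (hν : IsValT v ν) (hle : μ ≤ ν)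
    (hφ : φ ∈ TangentDir μ ν) (hg : g.natDegree < φ.natDegree) : μ g = ν g := by
  refine le_antisymm (hle g) (not_lt.1 fun hlt => ?_)
  obtain ⟨ψ, hψm, hψdeg, hψlt⟩ := exists_monic_val_lt hμ hν hlt
  exact hg.not_ge (hψdeg ▸ hφ.2.2 ψ hψm hψlt)

lemma val_lt_of_mem_tangentDir_of_muDvd (hμ : IsValT v μ) (hν : IsValT v ν) (hle : μ ≤ ν)
    (hφ : φ ∈ TangentDir μ ν) (h : MuDvd μ φ g) : μ g < ν g := by
  obtain ⟨a, ha⟩ := h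
  have hfin : μ a + μ φ ≠ ⊤ := by
    rw [← hμ.map_mul, ha.val_eq hμ]
    exact ha.ne_top
  exact ha.val_lt_val hμ hν hle (val_mul_lt_val_mul hμ hν hle (WithTop.add_ne_top.1 hfin).1 hφ.2.1)

lemma muDvd_of_mem_tangentDir_of_val_lt (hμ : IsValT v μ) (hν : IsValT v ν) (hle : μ ≤ ν)
    (hφ : φ ∈ TangentDir μ ν) (hg : μ g < ν g) : MuDvd μ φ g := by
  -- Otherwise `μ` and `ν` agree on `g mod φ`, hence on `q φ = g - (g mod φ)`, which is
  -- impossible since `μ(φ) < ν(φ)`.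
  refine muDvd_of_val_lt_val_modByMonic (not_le.1 fun hrg => ?_)
  set q := g /ₘ φ
  set r := g %ₘ φ
  have hqφ : q * φ = g - r := by linear_combination modByMonic_add_div g φ
  have hr : μ r = ν r := val_eq_of_mem_tangentDir_of_natDegree_lt hμ hν hle hφ <|
    natDegree_modByMonic_lt g hφ.1 (hφ.1.natDegree_pos.1 (natDegree_pos_of_mem_tangentDir hμ hν hφ))
  have hνqφ : ν (q * φ) = μ r := by
    rw [hqφ, hν.map_sub_eq_of_lt_right (hr ▸ hrg.trans_lt hg), hr]
  have hμqφ : μ (q * φ) = μ r := by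
    refine le_antisymm (hνqφ ▸ hle _) ?_
    simpa only [hqφ, min_eq_right hrg] using hμ.map_sub g r
  have hq : μ q + μ φ ≠ ⊤ := by
    rw [← hμ.map_mul, hμqφ]
    exact (hrg.trans_lt hg).ne_top
  have h := val_mul_lt_val_mul hμ hν hle (WithTop.add_ne_top.1 hq).1 hφ.2.1
  rw [hμqφ, hνqφ] at h
  exact h.false

lemma isKeyPol_of_mem_tangentDir (hμ : IsValT v μ) (hν : IsValT v ν) (hle : μ ≤ ν)
    (hφ : φ ∈ TangentDir μ ν) : IsKeyPol μ φ := by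
  have hdvd (g : K[X]) : MuDvd μ φ g ↔ μ g < ν g :=
    ⟨val_lt_of_mem_tangentDir_of_muDvd hμ hν hle hφ,
      muDvd_of_mem_tangentDir_of_val_lt hμ hν hle hφ⟩
  refine ⟨hφ.1, ⟨natDegree_pos_of_mem_tangentDir hμ hν hφ, fun f hf0 hfφ hf => ?_⟩,
    hφ.2.1.ne_top, ?_, fun a b hab => ?_⟩
  · exact ((hdvd f).1 hf).ne
      (val_eq_of_mem_tangentDir_of_natDegree_lt hμ hν hle hφ (natDegree_lt_natDegree hf0 hfφ))
  · rintro ⟨f, hf⟩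
    have h := (hdvd 1).1 ⟨f, hf.symm hμ⟩
    rw [hμ.map_one, hν.map_one] at h
    exact h.false
  · simpa only [hdvd] using val_lt_or_val_lt_of_val_mul_lt hμ hν hle ((hdvd _).1 hab)

end MLV

open MLV

/-- A valuation `μ ∈ T` is a maximal element of the poset `T` if and only if
`KP(μ) = ∅`. -/
theorem statement_1 {K : Type*} [Field K] {Λ : Type*} [AddCommGroup Λ] [LinearOrder Λ] [IsOrderedAddMonoid Λ]
    (v : FieldVal K Λ) (μ : Polynomial K → WithTop Λ) (hμ : IsValT v μ) :
    (∀ ν : Polynomial K → WithTop Λ, IsValT v ν → μ ≤ ν → μ = ν) ↔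
      ¬ ∃ φ : Polynomial K, IsKeyPol μ φ := by
  refine ⟨fun hmax ⟨φ, hφ⟩ => ?_, fun hno ν hν hle => ?_⟩
  · obtain ⟨ν, hν, hlt⟩ := hφ.exists_isValT_lt hμ
    exact hlt.ne (hmax ν hν hlt.le)
  · by_contra hne
    obtain ⟨φ, hφ⟩ := tangentDir_nonempty hμ hν hle hne
    exact hno ⟨φ, isKeyPol_of_mem_tangentDir hμ hν hle hφ⟩
end
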